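/- arXiv:1106.3810 — 3 statements merged into one kernel-verified Lean document; each statement's English description precedes it below -/
import Mathlib

section
/- For c₀ = 0, the functions x(t) = t + (1/π) arccot(2πt + k) and z(t) = z₀(1 + (2πt+k)²)/(1+k²) solve the system dx/dt = cos(2π(x−t)), dz/dt = 2πz sin(2π(x−t)), with x(0) = x₀ where k = cot(πx₀) and z(0) = z₀. -/
open Real

noncomputable def arccot (y : ℝ) : ℝ := π / 2 - Real.arctan y

/-! Along the trajectory the phase `2π(x t - t)` equals `2 arccot u` with `u = 2πt + k`, so both
right-hand sides are rational functions of `u`: `cos (2 arccot u) = 1 - 2 / (1 + u²)` and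
`sin (2 arccot u) = 2u / (1 + u²)`. Differentiating `x` and `z` directly gives the same rational
functions times the factor `2π = du/dt`, and the initial values follow from `arccot (cot θ) = θ`
on `(0, π)`. -/

lemma arccot_cot {θ : ℝ} (h₀ : 0 < θ) (h₁ : θ < π) : arccot (cot θ) = θ := by
  have hcot : cot θ = tan (π / 2 - θ) := by
    rw [tan_pi_div_two_sub, cot_eq_cos_div_sin, tan_eq_sin_div_cos, inv_div]
  rw [arccot, hcot, arctan_tan (by linarith) (by linarith)]
  ring

lemma hasDerivAt_arccot (y : ℝ) : HasDerivAt arccot (-(1 / (1 + y ^ 2))) y :=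
  (hasDerivAt_arctan y).const_sub (π / 2)

lemma cos_two_mul_arccot (y : ℝ) : cos (2 * arccot y) = 1 - 2 / (1 + y ^ 2) := by
  rw [arccot, mul_sub, mul_div_cancel₀ π two_ne_zero, cos_pi_sub, cos_two_mul, cos_sq_arctan]
  ring

lemma sin_two_mul_arccot (y : ℝ) : sin (2 * arccot y) = 2 * y / (1 + y ^ 2) := by
  have h : (0 : ℝ) ≤ 1 + y ^ 2 := by positivity
  rw [arccot, mul_sub, mul_div_cancel₀ π two_ne_zero, sin_pi_sub, sin_two_mul, sin_arctan,
    cos_arctan, mul_assoc, div_mul_div_comm, mul_one, mul_self_sqrt h]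
  ring

theorem trajectory_solves_system_c0_zero_general
    (x₀ z₀ : ℝ) (hx₀ : x₀ ∈ Set.Ioo (0 : ℝ) 1)
    (k : ℝ) (hk : k = Real.cot (π * x₀))
    (x z : ℝ → ℝ)
    (hx : ∀ t, x t = t + (1 / π) * arccot (2 * π * t + k))
    (hz : ∀ t, z t = z₀ * (1 + (2 * π * t + k) ^ 2) / (1 + k ^ 2)) :
    x 0 = x₀ ∧ z 0 = z₀ ∧
    ∀ t : ℝ,
      HasDerivAt x (Real.cos (2 * π * (x t - t))) t ∧
      HasDerivAt z (2 * π * z t * Real.sin (2 * π * (x t - t))) t := by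
  have hπ : π ≠ 0 := pi_ne_zero
  have hk₂ : 1 + k ^ 2 ≠ 0 := by positivity
  have hphase : ∀ t, 2 * π * (x t - t) = 2 * arccot (2 * π * t + k) := fun t => by
    rw [hx]; field_simp; ring
  have hu : ∀ t, HasDerivAt (fun t => 2 * π * t + k) (2 * π) t := fun t => by
    simpa using ((hasDerivAt_id t).const_mul (2 * π)).add_const k
  refine ⟨?_, ?_, fun t => ⟨?_, ?_⟩⟩
  · obtain ⟨h₀, h₁⟩ := hx₀
    have hθ : π * x₀ < π := by nlinarith [pi_pos]
    rw [hx, hk]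
    simp only [mul_zero, zero_add]
    rw [arccot_cot (by positivity) hθ]
    field_simp
  · rw [hz]; field_simp; ring
  · rw [hphase, cos_two_mul_arccot, funext hx]
    refine ((hasDerivAt_id' t).fun_add
      (((hasDerivAt_arccot _).comp t (hu t)).const_mul (1 / π))).congr_deriv ?_
    field_simp; ring
  · rw [hphase, sin_two_mul_arccot, hz, funext hz]
    refine ((((hu t).fun_pow 2).const_add 1).const_mul z₀ |>.div_const (1 + k ^ 2)).congr_deriv ?_
    field_simp; ring

theorem trajectory_solves_system_c0_zero
    (x₀ z₀ : ℝ) (hx₀ : x₀ ∈ Set.Ioo (0 : ℝ) 1) (hz₀ : 0 < z₀)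
    (k : ℝ) (hk : k = Real.cot (π * x₀))
    (x z : ℝ → ℝ)
    (hx : ∀ t, x t = t + (1 / π) * arccot (2 * π * t + k))
    (hz : ∀ t, z t = z₀ * (1 + (2 * π * t + k) ^ 2) / (1 + k ^ 2)) :
    x 0 = x₀ ∧ z 0 = z₀ ∧
    ∀ t : ℝ,
      HasDerivAt x (Real.cos (2 * π * (x t - t))) t ∧
      HasDerivAt z (2 * π * z t * Real.sin (2 * π * (x t - t))) t :=
  trajectory_solves_system_c0_zero_general x₀ z₀ hx₀ k hk x z hx hz
end

section
/- Let c₀ < −1, C₀ = √((c₀−2)/c₀), α(t) = −(c₀C₀/2)(2πt+k), and x(t) = t + (1/π) arccot(C₀ tan(α(t))). Then x′(t) < 0 for all t where it is defined; i.e., x′(t) = ((C₀²−1)sin²α(t) + c₀ − 1)/(cos²α(t)(1 + C₀² tan²α(t))) is negative. -/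
open Real

theorem x_deriv_negative_adverse_current (c₀ k : ℝ) (hc₀ : c₀ < -1)
    (C₀ : ℝ) (hC₀ : C₀ = Real.sqrt ((c₀ - 2) / c₀))
    (α : ℝ → ℝ) (hα : ∀ t, α t = -(c₀ * C₀ / 2) * (2 * π * t + k))
    (x : ℝ → ℝ)
    (hx : ∀ t, x t = t + (1 / π) * arccot (C₀ * Real.tan (α t))) :
    ∀ t : ℝ, Real.cos (α t) ≠ 0 →
      deriv x t =
        ((C₀ ^ 2 - 1) * Real.sin (α t) ^ 2 + c₀ - 1) /
          (Real.cos (α t) ^ 2 * (1 + C₀ ^ 2 * Real.tan (α t) ^ 2)) ∧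
      deriv x t < 0 := by
  intro t hcos
  have hπ := Real.pi_pos
  have hc0 : c₀ < 0 := by linarith
  have hfrac : (0:ℝ) ≤ (c₀ - 2) / c₀ := by
    rw [div_nonneg_iff]; right; constructor <;> linarith
  have hC2 : C₀ ^ 2 = (c₀ - 2) / c₀ := by rw [hC₀, sq_sqrt hfrac]
  set s := Real.sin (α t) with hs
  set c := Real.cos (α t) with hcdef
  have hpyth : s ^ 2 + c ^ 2 = 1 := Real.sin_sq_add_cos_sq (α t)
  have hc2pos : 0 < c ^ 2 := by positivity
  set A := -(c₀ * C₀ / 2) * (2 * π) with hA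
  have hαfun : α = fun u => A * u + -(c₀ * C₀ / 2) * k := by
    funext u; rw [hα]; ring
  have hαd : HasDerivAt α A t := by
    rw [hαfun]
    simpa using ((hasDerivAt_id t).const_mul A).add_const (-(c₀ * C₀ / 2) * k)
  have htand : HasDerivAt (fun u => Real.tan (α u)) ((1 / c ^ 2) * A) t :=
    (Real.hasDerivAt_tan hcos).comp t hαd
  have harctand : HasDerivAt (fun u => Real.arctan (C₀ * Real.tan (α u)))
      ((1 / (1 + (C₀ * Real.tan (α t)) ^ 2)) * (C₀ * ((1 / c ^ 2) * A))) t :=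
    (Real.hasDerivAt_arctan _).comp t (htand.const_mul C₀)
  have hxd : HasDerivAt x
      (1 + (1 / π) * (0 - (1 / (1 + (C₀ * Real.tan (α t)) ^ 2)) *
        (C₀ * ((1 / c ^ 2) * A)))) t := by
    have hxf : x = fun u => u + (1 / π) * (π / 2 - Real.arctan (C₀ * Real.tan (α u))) := by
      funext u; rw [hx u]; rfl
    rw [hxf]
    exact (hasDerivAt_id t).add
      (((hasDerivAt_const t (π / 2)).sub harctand).const_mul (1 / π))
  have htan : Real.tan (α t) = s / c := Real.tan_eq_sin_div_cos (α t)
  have hdenpos : 0 < c ^ 2 + C₀ ^ 2 * s ^ 2 := by positivity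
  have hden : c ^ 2 * (1 + C₀ ^ 2 * Real.tan (α t) ^ 2) = c ^ 2 + C₀ ^ 2 * s ^ 2 := by
    rw [htan]; field_simp
  have hc0ne : c₀ ≠ 0 := ne_of_lt hc0
  have hcC : c₀ * C₀ ^ 2 = c₀ - 2 := by
    rw [hC2]; field_simp
  have h1ne : (1 + (C₀ * (s / c)) ^ 2) ≠ 0 := by positivity
  have hderiv0 : deriv x t = 1 + c₀ * C₀ ^ 2 / (c ^ 2 + C₀ ^ 2 * s ^ 2) := by
    rw [hxd.deriv, htan, hA]
    field_simp
    ring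
  have hderiv : deriv x t = 1 + (c₀ - 2) / (c ^ 2 + C₀ ^ 2 * s ^ 2) := by
    rw [hderiv0, hcC]
  have hnum : (C₀ ^ 2 - 1) * s ^ 2 + c₀ - 1 = (c ^ 2 + C₀ ^ 2 * s ^ 2) + (c₀ - 2) := by
    nlinarith [hpyth]
  constructor
  · rw [hderiv]
    rw [show Real.cos (α t) ^ 2 * (1 + C₀ ^ 2 * Real.tan (α t) ^ 2) =
        c ^ 2 + C₀ ^ 2 * s ^ 2 from hden, hnum]
    field_simp
  · rw [hderiv]
    have hNeq : c₀ * ((C₀ ^ 2 - 1) * s ^ 2 + c₀ - 1) = -2 * s ^ 2 + c₀ ^ 2 - c₀ := by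
      rw [hC2]; field_simp; ring
    have hs1 : s ^ 2 ≤ 1 := by nlinarith [sq_nonneg c]
    have hNneg : (C₀ ^ 2 - 1) * s ^ 2 + c₀ - 1 < 0 := by nlinarith
    rw [hnum] at hNneg
    have : 1 + (c₀ - 2) / (c ^ 2 + C₀ ^ 2 * s ^ 2)
        = ((c ^ 2 + C₀ ^ 2 * s ^ 2) + (c₀ - 2)) / (c ^ 2 + C₀ ^ 2 * s ^ 2) := by
      field_simp
    rw [this]
    exact div_neg_of_neg_of_pos hNneg hdenpos
end

section
/- Let c₀ > 2, C₀ = √((c₀−2)/c₀), α(t) = −(c₀C₀/2)(2πt+k), and x(t) = t + (1/π) arccot(C₀ tan(α(t))). Then x′(t) > 0 for all t where it is defined. -/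
open Real

theorem x_deriv_positive_strong_favorable_current (c₀ k : ℝ) (hc₀ : c₀ > 2)
    (C₀ : ℝ) (hC₀ : C₀ = Real.sqrt ((c₀ - 2) / c₀))
    (α : ℝ → ℝ) (hα : ∀ t, α t = -(c₀ * C₀ / 2) * (2 * π * t + k))
    (x : ℝ → ℝ)
    (hx : ∀ t, x t = t + (1 / π) * arccot (C₀ * Real.tan (α t))) :
    ∀ t : ℝ, Real.cos (α t) ≠ 0 → deriv x t > 0 := by
  intro t hcos
  rw [hα t] at hcos
  have hfun : x = fun s => s + (1 / π) *
      (π / 2 - Real.arctan (C₀ * Real.tan (-(c₀ * C₀ / 2) * (2 * π * s + k)))) := by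
    funext s
    rw [hx s, hα s]
    rfl
  rw [hfun]
  set a := -(c₀ * C₀ / 2) * (2 * π * t + k) with ha
  have h1 : HasDerivAt (fun s : ℝ => -(c₀ * C₀ / 2) * (2 * π * s + k))
      (-(c₀ * C₀ / 2) * (2 * π)) t := by
    simpa using (((hasDerivAt_id t).const_mul (2 * π)).add_const k).const_mul (-(c₀ * C₀ / 2))
  have h2 := (Real.hasDerivAt_tan hcos).comp t h1
  have h3 := h2.const_mul C₀
  have h4 := (Real.hasDerivAt_arctan (C₀ * Real.tan a)).comp t h3
  have h5 := h4.const_sub (π / 2)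
  have h6 := h5.const_mul (1 / π)
  have h7 := (hasDerivAt_id t).add h6
  have h7' : HasDerivAt (fun s => s + 1 / π *
      (π / 2 - Real.arctan (C₀ * Real.tan (-(c₀ * C₀ / 2) * (2 * π * s + k)))))
      (1 + 1 / π * -(1 / (1 + (C₀ * Real.tan a) ^ 2) *
        (C₀ * (1 / Real.cos a ^ 2 * (-(c₀ * C₀ / 2) * (2 * π)))))) t := h7
  rw [h7'.deriv]
  have hπ : π ≠ 0 := Real.pi_ne_zero
  have hA : (0:ℝ) < 1 + (C₀ * Real.tan a) ^ 2 := by positivity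
  have hB : (0:ℝ) < Real.cos a ^ 2 := by positivity
  have heq : 1 + 1 / π * -(1 / (1 + (C₀ * Real.tan a) ^ 2) *
        (C₀ * (1 / Real.cos a ^ 2 * (-(c₀ * C₀ / 2) * (2 * π)))))
      = 1 + c₀ * C₀ ^ 2 * (1 / (1 + (C₀ * Real.tan a) ^ 2) * (1 / Real.cos a ^ 2)) := by
    field_simp
  rw [heq]
  have hnn : 0 ≤ c₀ * C₀ ^ 2 * (1 / (1 + (C₀ * Real.tan a) ^ 2) * (1 / Real.cos a ^ 2)) := by
    apply mul_nonneg (mul_nonneg (by linarith) (sq_nonneg _))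
    positivity
  linarith
end
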